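/- arXiv:1312.4774 — 2 statements merged into one kernel-verified Lean document; each statement's English description precedes it below -/
import Mathlib

section
/- Let α > 0 and let a = α·𝟙 ∈ ℝ_{>0}^{3+3n} be the constant vector with all entries equal to α. Then F1 vanishes identically, P(ξ) = (2α²/(n+1)²)(ξⁿ − 1)(ξ^{n+1} − 1), whose only positive real zero is ξ = 1 (a zero of multiplicity two), and the only g ∈ ℝ_{>0}^3 with Θ(g,a) = 0 is g = (1,1,1). Consequently, for every λ ∈ ℝ_{>0}^{3n}, a is the unique positive steady state of ẋ = S diag(κ(a,λ)) Φ(x) in the coset { x ∈ ℝ_{>0}^{3+3n} : Z x = Z a }. -/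
open Finset

namespace Phos

noncomputable section

/-- Standard basis vector of `ℝ^N`, with `1`-based index `j`. -/
def e (N : ℕ) (j : ℕ) : Fin N → ℝ := fun m => if (m : ℕ) + 1 = j then 1 else 0

/-- Standard basis vector of `ℕ^N`, with `1`-based index `j`. -/
def eN (N : ℕ) (j : ℕ) : Fin N → ℕ := fun m => if (m : ℕ) + 1 = j then 1 else 0

/-- The stoichiometric matrix `S` of the `n`-site sequential distributive
phosphorylation network.  For each `i = 1,…,n` the six columns `6(i−1)+1,…,6(i−1)+6`
are `e_{1+3i}−e_1−e_{3i−1}`, `e_1+e_{3i−1}−e_{1+3i}`, `e_1+e_{2+3i}−e_{1+3i}`,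
`e_{3+3i}−e_3−e_{2+3i}`, `e_3+e_{2+3i}−e_{3+3i}`, `e_3+e_{3i−1}−e_{3+3i}`. -/
def Smat (n : ℕ) : Matrix (Fin (3*n+3)) (Fin (6*n)) ℝ :=
  Matrix.of fun m r =>
    (![e (3*n+3) (1+3*((r : ℕ)/6+1)) - e (3*n+3) 1 - e (3*n+3) (3*((r : ℕ)/6+1)-1),
       e (3*n+3) 1 + e (3*n+3) (3*((r : ℕ)/6+1)-1) - e (3*n+3) (1+3*((r : ℕ)/6+1)),
       e (3*n+3) 1 + e (3*n+3) (2+3*((r : ℕ)/6+1)) - e (3*n+3) (1+3*((r : ℕ)/6+1)),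
       e (3*n+3) (3+3*((r : ℕ)/6+1)) - e (3*n+3) 3 - e (3*n+3) (2+3*((r : ℕ)/6+1)),
       e (3*n+3) 3 + e (3*n+3) (2+3*((r : ℕ)/6+1)) - e (3*n+3) (3+3*((r : ℕ)/6+1)),
       e (3*n+3) 3 + e (3*n+3) (3*((r : ℕ)/6+1)-1) - e (3*n+3) (3+3*((r : ℕ)/6+1))])
      ⟨(r : ℕ) % 6, Nat.mod_lt _ (by norm_num)⟩ m

/-- The rate exponent matrix `Y`: for each `i = 1,…,n` the six columns
`6(i−1)+1,…,6(i−1)+6` are `e_1+e_{3i−1}`, `e_{1+3i}`, `e_{1+3i}`,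
`e_3+e_{2+3i}`, `e_{3+3i}`, `e_{3+3i}`. -/
def Ymat (n : ℕ) : Matrix (Fin (3*n+3)) (Fin (6*n)) ℕ :=
  Matrix.of fun m r =>
    (![eN (3*n+3) 1 + eN (3*n+3) (3*((r : ℕ)/6+1)-1),
       eN (3*n+3) (1+3*((r : ℕ)/6+1)),
       eN (3*n+3) (1+3*((r : ℕ)/6+1)),
       eN (3*n+3) 3 + eN (3*n+3) (2+3*((r : ℕ)/6+1)),
       eN (3*n+3) (3+3*((r : ℕ)/6+1)),
       eN (3*n+3) (3+3*((r : ℕ)/6+1))])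
      ⟨(r : ℕ) % 6, Nat.mod_lt _ (by norm_num)⟩ m

/-- The monomial map `Φ(x)_j = ∏ₘ xₘ^{Y_{mj}}`. -/
def Phi (n : ℕ) (x : Fin (3*n+3) → ℝ) : Fin (6*n) → ℝ :=
  fun r => ∏ m, x m ^ (Ymat n m r)

/-- The conservation matrix `Z` (rows `z1, z2, z3`). -/
def Zmat (n : ℕ) : Matrix (Fin 3) (Fin (3*n+3)) ℝ :=
  Matrix.of fun r j =>
    if (r : ℕ) = 0 then (if (j : ℕ) % 3 = 0 then 1 else 0)
    else if (r : ℕ) = 1 then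
      (if (j : ℕ) % 3 = 1 then 1 else if (j : ℕ) = 0 ∨ (j : ℕ) = 2 then -1 else 0)
    else (if (j : ℕ) % 3 = 2 then 1 else 0)

/-- The `6 × 3` block `E0`. -/
def E0 : Fin 6 → Fin 3 → ℝ :=
  ![![1,0,1], ![1,0,0], ![0,0,1], ![0,1,1], ![0,1,0], ![0,0,1]]

/-- The block diagonal matrix `E` with `n` copies of `E0`. -/
def Emat (n : ℕ) : Matrix (Fin (6*n)) (Fin (3*n)) ℝ :=
  Matrix.of fun r c =>
    if (r : ℕ) / 6 = (c : ℕ) / 3 then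
      E0 ⟨(r : ℕ) % 6, Nat.mod_lt _ (by norm_num)⟩ ⟨(c : ℕ) % 3, Nat.mod_lt _ (by norm_num)⟩
    else 0

/-- The matrix `L ∈ ℤ^{(3+3n)×3}`: row `1 = (1, n−1, −1)`, row `2 = (−1, −n, 0)`,
row `3 = (1, n−2, −1)`, and for `i = 1,…,n` rows `1+3i` and `3+3i` equal
`(0, i−2, −1)` while row `2+3i = (−1, i−n, 0)`. -/
def Lmat (n : ℕ) : Matrix (Fin (3*n+3)) (Fin 3) ℤ :=
  Matrix.of fun j c =>
    if (j : ℕ) = 0 then ![1, (n : ℤ) - 1, -1] c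
    else if (j : ℕ) = 1 then ![-1, -(n : ℤ), 0] c
    else if (j : ℕ) = 2 then ![1, (n : ℤ) - 2, -1] c
    else if (j : ℕ) % 3 = 1 then ![-1, (((j : ℕ) / 3 : ℕ) : ℤ) - (n : ℤ), 0] c
    else ![0, (((j : ℕ) / 3 : ℕ) : ℤ) - 2, -1] c

/-- `g^L ∈ ℝ_{>0}^{3+3n}`, `(g^L)_j = g₁^{L_{j1}} g₂^{L_{j2}} g₃^{L_{j3}}`. -/
def gL (n : ℕ) (g : Fin 3 → ℝ) : Fin (3*n+3) → ℝ :=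
  fun j => ∏ c, g c ^ (Lmat n j c)

/-- The coset condition map `Θ(g,a) = Z diag(a) (g^L − 𝟙)`. -/
def Theta (n : ℕ) (g : Fin 3 → ℝ) (a : Fin (3*n+3) → ℝ) : Fin 3 → ℝ :=
  (Zmat n).mulVec (fun j => a j * (gL n g j - 1))

/-- The rate constants `κ(a,λ)_j = (Eλ)_j / Φ(a)_j`. -/
def kappaOf (n : ℕ) (a : Fin (3*n+3) → ℝ) (lam : Fin (3*n) → ℝ) : Fin (6*n) → ℝ :=
  fun r => (Emat n).mulVec lam r / Phi n a r

/-- `x` is a (positive) steady state of `ẋ = S diag(κ) Φ(x)`. -/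
def isSteady (n : ℕ) (κ : Fin (6*n) → ℝ) (x : Fin (3*n+3) → ℝ) : Prop :=
  (Smat n).mulVec (fun r => κ r * Phi n x r) = 0

/-- The `1`-based component `a_j` of a vector `a ∈ ℝ^{3+3n}`. -/
def av (n : ℕ) (a : Fin (3*n+3) → ℝ) (j : ℕ) : ℝ :=
  if h : j - 1 < 3*n+3 then a ⟨j - 1, h⟩ else 0

/-- `ω1 = Σ_{k=0}^n a_{1+3k}`. -/
def om1 (n : ℕ) (a : Fin (3*n+3) → ℝ) : ℝ := ∑ k ∈ Finset.range (n+1), av n a (1+3*k)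

/-- `ω2 = −a₁ − a₃ + Σ_{k=0}^n a_{2+3k}`. -/
def om2 (n : ℕ) (a : Fin (3*n+3) → ℝ) : ℝ :=
  -(av n a 1) - av n a 3 + ∑ k ∈ Finset.range (n+1), av n a (2+3*k)

/-- `ω3 = Σ_{k=0}^n a_{3+3k}`. -/
def om3 (n : ℕ) (a : Fin (3*n+3) → ℝ) : ℝ := ∑ k ∈ Finset.range (n+1), av n a (3+3*k)

/-- `Ω2(ξ) = Σ_{k=0}^n a_{2+3k} ξ^k`. -/
def Om2 (n : ℕ) (a : Fin (3*n+3) → ℝ) (ξ : ℝ) : ℝ :=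
  ∑ k ∈ Finset.range (n+1), av n a (2+3*k) * ξ ^ k

/-- `Ω4(ξ) = Σ_{k=1}^n a_{1+3k} ξ^{k−1}`. -/
def Om4 (n : ℕ) (a : Fin (3*n+3) → ℝ) (ξ : ℝ) : ℝ :=
  ∑ k ∈ Finset.Icc 1 n, av n a (1+3*k) * ξ ^ (k-1)

/-- `Ω6(ξ) = Σ_{k=1}^n a_{3+3k} ξ^{k−1}`. -/
def Om6 (n : ℕ) (a : Fin (3*n+3) → ℝ) (ξ : ℝ) : ℝ :=
  ∑ k ∈ Finset.Icc 1 n, av n a (3+3*k) * ξ ^ (k-1)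

/-- `Δ(ξ) = (a₁/ω1)ξ − a₃/ω3`. -/
def Dlt (n : ℕ) (a : Fin (3*n+3) → ℝ) (ξ : ℝ) : ℝ :=
  av n a 1 / om1 n a * ξ - av n a 3 / om3 n a

/-- `ξ* = (ω1 a₃)/(a₁ ω3)`. -/
def xistar (n : ℕ) (a : Fin (3*n+3) → ℝ) : ℝ :=
  om1 n a * av n a 3 / (av n a 1 * om3 n a)

/-- `F1(ξ) = Ω6(ξ)/ω3 − Ω4(ξ)/ω1`. -/
def F1 (n : ℕ) (a : Fin (3*n+3) → ℝ) (ξ : ℝ) : ℝ :=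
  Om6 n a ξ / om3 n a - Om4 n a ξ / om1 n a

/-- `F3(ξ) = (a₁ξ/ω1)(Ω6(ξ)/ω3) − (a₃/ω3)(Ω4(ξ)/ω1)`. -/
def F3 (n : ℕ) (a : Fin (3*n+3) → ℝ) (ξ : ℝ) : ℝ :=
  av n a 1 * ξ / om1 n a * (Om6 n a ξ / om3 n a) - av n a 3 / om3 n a * (Om4 n a ξ / om1 n a)

/-- `A(ξ) = (Ω4(ξ)+Ω6(ξ))Ω2(ξ)`. -/
def Ap (n : ℕ) (a : Fin (3*n+3) → ℝ) (ξ : ℝ) : ℝ := (Om4 n a ξ + Om6 n a ξ) * Om2 n a ξ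

/-- `B(ξ) = (a₁ξ + a₃)Ω2(ξ) − ω2 ξ (Ω4(ξ)+Ω6(ξ))`. -/
def Bp (n : ℕ) (a : Fin (3*n+3) → ℝ) (ξ : ℝ) : ℝ :=
  (av n a 1 * ξ + av n a 3) * Om2 n a ξ - om2 n a * ξ * (Om4 n a ξ + Om6 n a ξ)

/-- `C(ξ) = ξ(a₁ξ + a₃)(ω1+ω2+ω3)`. -/
def Cp (n : ℕ) (a : Fin (3*n+3) → ℝ) (ξ : ℝ) : ℝ :=
  ξ * (av n a 1 * ξ + av n a 3) * (om1 n a + om2 n a + om3 n a)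

/-- `P(ξ) = A(ξ)Δ(ξ)² + B(ξ)Δ(ξ)F1(ξ) − C(ξ)F1(ξ)²`. -/
def Pp (n : ℕ) (a : Fin (3*n+3) → ℝ) (ξ : ℝ) : ℝ :=
  Ap n a ξ * (Dlt n a ξ)^2 + Bp n a ξ * Dlt n a ξ * F1 n a ξ - Cp n a ξ * (F1 n a ξ)^2

/-- `θ(ξ) = 2C(ξ)F1(ξ) − Δ(ξ)[B(ξ) + (B(ξ)² + 4A(ξ)C(ξ))^{1/2}]`. -/
def thetaFun (n : ℕ) (a : Fin (3*n+3) → ℝ) (ξ : ℝ) : ℝ :=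
  2 * Cp n a ξ * F1 n a ξ -
    Dlt n a ξ * (Bp n a ξ + Real.sqrt ((Bp n a ξ)^2 + 4 * Ap n a ξ * Cp n a ξ))

/-- `g1(ξ) = ξ^{1−n} F1(ξ)/Δ(ξ)`. -/
def g1f (n : ℕ) (a : Fin (3*n+3) → ℝ) (ξ : ℝ) : ℝ :=
  ξ ^ ((1 : ℤ) - (n : ℤ)) * F1 n a ξ / Dlt n a ξ

/-- `g3(ξ) = ξ^{−1} F3(ξ)/Δ(ξ)`. -/
def g3f (n : ℕ) (a : Fin (3*n+3) → ℝ) (ξ : ℝ) : ℝ :=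
  ξ⁻¹ * F3 n a ξ / Dlt n a ξ

/-- The candidate second steady state `b = diag(g^L) a` built from a zero `ξ`
of the determining equation, with `g = (g1(ξ), ξ, g3(ξ))`. -/
def bOf (n : ℕ) (a : Fin (3*n+3) → ℝ) (ξ : ℝ) : Fin (3*n+3) → ℝ :=
  fun j => gL n ![g1f n a ξ, ξ, g3f n a ξ] j * a j

end

end Phos

/-!
With `κ = κ(a, λ)` the mass-action rates at `x` are `(Eλ)ᵣ Φ(x/a)ᵣ`, so only `y = x/a` matters.
At `y = 𝟙` every column of `E` is a cycle of reactions, hence `a` is a steady state. At a positive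
steady state the rows of the complexes give `y_K y_{S_i} = y_{C_{i+1}}` and
`y_F y_{S_{i+1}} = y_{D_{i+1}}`, and the substrate rows say that the net flux
`λ (y_{C_{i+1}} - y_{D_{i+1}})` from `S_i` to `S_{i+1}` is the same for all `i`; it vanishes past
the last site, so `y_C = y_D` throughout. These relations say exactly that `y = g^L` for some
`g > 0`, and then `x = a ∘ g^L` lies in the coset of `a` iff `Θ(g, a) = 0`.

For constant `a` the first and third components of `Θ(g, a) = 0` differ only in the term of
`K` versus `F`, which forces `g₂ = 1`; the remaining two equations combine to
`(1 - g₁)(2n g₁ + (n+1)² g₃) = 0`. The claims on `F1` and `P` are computations with geometric sums.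
-/

namespace Phos

/-- Vectors are read on `ℕ`, as `0` outside their range: the block formulas below then hold for
every block index, the out-of-range blocks contributing `0`. -/
def pad {N : ℕ} (x : Fin N → ℝ) (j : ℕ) : ℝ := if h : j < N then x ⟨j, h⟩ else 0

lemma pad_of_lt {N : ℕ} (x : Fin N → ℝ) {j : ℕ} (h : j < N) : pad x j = x ⟨j, h⟩ := dif_pos h

lemma pad_of_le {N : ℕ} (x : Fin N → ℝ) {j : ℕ} (h : N ≤ j) : pad x j = 0 := dif_neg (by omega)

lemma sum_range_mul {M : Type*} [AddCommMonoid M] (k m : ℕ) (f : ℕ → M) :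
    ∑ j ∈ range (k * m), f j = ∑ q ∈ range m, ∑ s ∈ range k, f (k * q + s) := by
  induction m with
  | zero => simp
  | succ m ih => rw [Nat.mul_succ, sum_range_add, ih, sum_range_succ]

lemma mulVec_apply_eq_sum_range {M N : ℕ} (A : Matrix (Fin M) (Fin N) ℝ) (v : Fin N → ℝ)
    (m : Fin M) : A.mulVec v m = ∑ r ∈ range N, pad (A m) r * pad v r := by
  rw [← Fin.sum_univ_eq_sum_range]
  simp [Matrix.mulVec, dotProduct, pad_of_lt]

/- Species `0, 1, 2` are `K, S₀, F`; for `i < n` species `3i+3, 3i+4, 3i+5` are the complex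
`C_{i+1}` of `K` with `S_i`, the substrate `S_{i+1}` and the complex `D_{i+1}` of `F` with
`S_{i+1}`; reactions `6i, …, 6i+5` form block `i`. -/

lemma Smat_mulVec_apply {n : ℕ} (v : Fin (6*n) → ℝ) (m : Fin (3*n+3)) :
    (Smat n).mulVec v m = ∑ i ∈ range n,
      (e _ 1 m * (pad v (6*i+1) + pad v (6*i+2) - pad v (6*i))
      + e _ 3 m * (pad v (6*i+4) + pad v (6*i+5) - pad v (6*i+3))
      + e _ (3*i+2) m * (pad v (6*i+1) + pad v (6*i+5) - pad v (6*i))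
      + e _ (3*i+4) m * (pad v (6*i) - pad v (6*i+1) - pad v (6*i+2))
      + e _ (3*i+5) m * (pad v (6*i+2) + pad v (6*i+4) - pad v (6*i+3))
      + e _ (3*i+6) m * (pad v (6*i+3) - pad v (6*i+4) - pad v (6*i+5))) := by
  rw [mulVec_apply_eq_sum_range, sum_range_mul]
  refine sum_congr rfl fun i hi => ?_
  have hi : i < n := mem_range.mp hi
  simp only [sum_range_succ, sum_range_zero, zero_add]
  rw [pad_of_lt _ (by omega : 6*i+0 < 6*n), pad_of_lt _ (by omega : 6*i+1 < 6*n),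
    pad_of_lt _ (by omega : 6*i+2 < 6*n), pad_of_lt _ (by omega : 6*i+3 < 6*n),
    pad_of_lt _ (by omega : 6*i+4 < 6*n), pad_of_lt _ (by omega : 6*i+5 < 6*n)]
  simp only [Smat, Matrix.of_apply, Nat.mul_add_div (by norm_num : 0 < 6), Nat.mul_add_mod]
  simp only [Nat.succ_eq_add_one, Nat.reduceAdd, Nat.zero_div, add_zero, Nat.zero_mod,
    Nat.reduceDiv, Nat.one_mod, Nat.reduceMod, Nat.mod_succ,
    show 3 * (i + 1) - 1 = 3 * i + 2 by omega, show 1 + 3 * (i + 1) = 3 * i + 4 by omega,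
    show 2 + 3 * (i + 1) = 3 * i + 5 by omega, show 3 + 3 * (i + 1) = 3 * i + 6 by omega,
    Fin.zero_eta, Fin.isValue, Fin.mk_one, Fin.reduceFinMk, Matrix.cons_val', Matrix.cons_val,
    Matrix.cons_val_fin_one, Matrix.cons_val_zero, Matrix.cons_val_one, Pi.sub_apply, Pi.add_apply]
  ring

section rows

variable {n : ℕ} (v : Fin (6*n) → ℝ)

lemma Smat_mulVec_complexC {i : ℕ} (hi : i < n) :
    (Smat n).mulVec v ⟨3*i+3, by omega⟩ = pad v (6*i) - pad v (6*i+1) - pad v (6*i+2) := by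
  rw [Smat_mulVec_apply, sum_eq_single_of_mem i (mem_range.mpr hi)]
  · simp (disch := omega) only [e, ↓reduceIte, if_neg]
    ring
  · intro j _ hj
    simp (disch := omega) only [e, if_neg]
    ring

lemma Smat_mulVec_complexD {i : ℕ} (hi : i < n) :
    (Smat n).mulVec v ⟨3*i+5, by omega⟩ = pad v (6*i+3) - pad v (6*i+4) - pad v (6*i+5) := by
  rw [Smat_mulVec_apply, sum_eq_single_of_mem i (mem_range.mpr hi)]
  · simp (disch := omega) only [e, ↓reduceIte, if_neg]
    ring
  · intro j _ hj
    simp (disch := omega) only [e, if_neg]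
    ring

lemma Smat_mulVec_substrate {i : ℕ} (hi : i < n) :
    (Smat n).mulVec v ⟨3*i+4, by omega⟩ = (pad v (6*i+2) + pad v (6*i+4) - pad v (6*i+3))
      + (pad v (6*i+7) + pad v (6*i+11) - pad v (6*i+6)) := by
  rw [Smat_mulVec_apply, sum_eq_add i (i+1) (by omega)]
  · simp (disch := omega) only [e, mul_add, ↓reduceIte, if_neg]
    ring
  · intro j _ hj
    simp (disch := omega) only [e, if_neg]
    ring
  · exact fun h => absurd (mem_range.mpr hi) h
  · intro h
    rw [mem_range] at h
    have hv : ∀ k, pad v (6*(i+1)+k) = 0 := fun k => pad_of_le v (by omega)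
    simp only [hv, show pad v (6*(i+1)) = 0 from hv 0]
    ring

end rows

lemma Emat_mulVec_apply {n i s : ℕ} (hi : i < n) (hs : s < 6) (lam : Fin (3*n) → ℝ) :
    (Emat n).mulVec lam ⟨6*i+s, by omega⟩ = ∑ t : Fin 3, E0 ⟨s, hs⟩ t * pad lam (3*i+t) := by
  rw [mulVec_apply_eq_sum_range, sum_range_mul, sum_eq_single_of_mem i (mem_range.mpr hi),
    ← Fin.sum_univ_eq_sum_range]
  · refine sum_congr rfl fun t _ => ?_
    have ht : (t : ℕ) < 3 := t.isLt
    simp [pad_of_lt _ (by omega : 3*i+t < 3*n), Emat, Nat.mul_add_div, Nat.mod_eq_of_lt ht,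
      Nat.div_eq_of_lt ht, Nat.mod_eq_of_lt hs, Nat.div_eq_of_lt hs]
  · intro q hq hqi
    refine sum_eq_zero fun t ht => ?_
    have ht : t < 3 := mem_range.mp ht
    have hq : q < n := mem_range.mp hq
    simp [pad_of_lt _ (by omega : 3*q+t < 3*n), Emat, Nat.mul_add_div, Nat.div_eq_of_lt ht,
      Nat.div_eq_of_lt hs, Ne.symm hqi]

lemma prod_pow_eN {N j : ℕ} (hj1 : 1 ≤ j) (hjN : j ≤ N) (x : Fin N → ℝ) :
    ∏ m, x m ^ eN N j m = pad x (j-1) := by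
  rw [prod_eq_single_of_mem ⟨j-1, by omega⟩ (mem_univ _)]
  · simp [eN, pad_of_lt x (by omega : j - 1 < N), show j - 1 + 1 = j by omega]
  · intro m _ hm
    have : (m : ℕ) + 1 ≠ j := fun h => hm (Fin.ext (by dsimp only; omega))
    simp [eN, this]

lemma Phi_apply {n i s : ℕ} (hi : i < n) (hs : s < 6) (x : Fin (3*n+3) → ℝ) :
    Phi n x ⟨6*i+s, by omega⟩ = ![pad x 0 * pad x (3*i+1), pad x (3*i+3), pad x (3*i+3),
      pad x 2 * pad x (3*i+4), pad x (3*i+5), pad x (3*i+5)] ⟨s, hs⟩ := by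
  simp only [Phi, Ymat, Matrix.of_apply, Nat.mul_add_div (by norm_num : 0 < 6),
    Nat.mul_add_mod, Nat.div_eq_of_lt hs, Nat.mod_eq_of_lt hs, add_zero]
  interval_cases s <;>
    simp (disch := omega) [pow_add, prod_mul_distrib, prod_pow_eN,
      show 3 * (i + 1) - 1 - 1 = 3 * i + 1 by omega, show 1 + 3 * (i + 1) - 1 = 3 * i + 3 by omega,
      show 2 + 3 * (i + 1) - 1 = 3 * i + 4 by omega, show 3 + 3 * (i + 1) - 1 = 3 * i + 5 by omega]

def rates (n : ℕ) (lam : Fin (3*n) → ℝ) (y : Fin (3*n+3) → ℝ) : Fin (6*n) → ℝ :=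
  fun r => (Emat n).mulVec lam r * Phi n y r

lemma isSteady_kappaOf_iff {n : ℕ} (a x : Fin (3*n+3) → ℝ) (lam : Fin (3*n) → ℝ) :
    isSteady n (kappaOf n a lam) x ↔ (Smat n).mulVec (rates n lam (x / a)) = 0 := by
  have hrates : (fun r => kappaOf n a lam r * Phi n x r) = rates n lam (x / a) := by
    funext r
    simp only [kappaOf, rates, Phi, Pi.div_apply, div_pow, prod_div_distrib]
    ring
  rw [isSteady, hrates]

lemma pad_rates {n : ℕ} (lam : Fin (3*n) → ℝ) (y : Fin (3*n+3) → ℝ) (i : ℕ) :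
    pad (rates n lam y) (6*i) = (pad lam (3*i) + pad lam (3*i+2)) * (pad y 0 * pad y (3*i+1)) ∧
    pad (rates n lam y) (6*i+1) = pad lam (3*i) * pad y (3*i+3) ∧
    pad (rates n lam y) (6*i+2) = pad lam (3*i+2) * pad y (3*i+3) ∧
    pad (rates n lam y) (6*i+3) =
      (pad lam (3*i+1) + pad lam (3*i+2)) * (pad y 2 * pad y (3*i+4)) ∧
    pad (rates n lam y) (6*i+4) = pad lam (3*i+1) * pad y (3*i+5) ∧
    pad (rates n lam y) (6*i+5) = pad lam (3*i+2) * pad y (3*i+5) := by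
  by_cases hi : i < n
  · have h : ∀ s (hs : s < 6), pad (rates n lam y) (6*i+s) =
        (∑ t : Fin 3, E0 ⟨s, hs⟩ t * pad lam (3*i+t)) *
          ![pad y 0 * pad y (3*i+1), pad y (3*i+3), pad y (3*i+3),
            pad y 2 * pad y (3*i+4), pad y (3*i+5), pad y (3*i+5)] ⟨s, hs⟩ := by
      intro s hs
      rw [pad_of_lt _ (by omega), rates, Emat_mulVec_apply hi hs, Phi_apply hi hs]
    have h0 := h 0 (by norm_num)
    simp only [add_zero] at h0
    refine ⟨?_, ?_, ?_, ?_, ?_, ?_⟩ <;> simp [h0, h, Fin.sum_univ_three, E0]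
  · have hl : ∀ t, pad lam (3*i+t) = 0 := fun t => pad_of_le lam (by omega)
    have hr : ∀ s, pad (rates n lam y) (6*i+s) = 0 := fun s => pad_of_le _ (by omega)
    have hl0 : pad lam (3*i) = 0 := pad_of_le lam (by omega)
    have hr0 : pad (rates n lam y) (6*i) = 0 := pad_of_le _ (by omega)
    simp [hl, hr, hl0, hr0]

lemma Smat_mulVec_rates_one {n : ℕ} (lam : Fin (3*n) → ℝ) :
    (Smat n).mulVec (rates n lam 1) = 0 := by
  have hone : ∀ k < 3*n+3, pad (1 : Fin (3*n+3) → ℝ) k = 1 := fun k hk => pad_of_lt _ hk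
  funext m
  rw [Smat_mulVec_apply, Pi.zero_apply]
  refine sum_eq_zero fun i hi => ?_
  have hi : i < n := mem_range.mp hi
  obtain ⟨w0, w1, w2, w3, w4, w5⟩ := pad_rates lam 1 i
  rw [w0, w1, w2, w3, w4, w5, hone 0 (by omega), hone 2 (by omega), hone (3*i+1) (by omega),
    hone (3*i+3) (by omega), hone (3*i+4) (by omega), hone (3*i+5) (by omega)]
  ring

lemma isSteady_kappaOf_self {n : ℕ} {a : Fin (3*n+3) → ℝ} (ha : ∀ m, a m ≠ 0)
    (lam : Fin (3*n) → ℝ) : isSteady n (kappaOf n a lam) a := by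
  rw [isSteady_kappaOf_iff, show a / a = 1 from funext fun m => div_self (ha m)]
  exact Smat_mulVec_rates_one lam

section steadyState

variable {n : ℕ} {lam : Fin (3*n) → ℝ} {y : Fin (3*n+3) → ℝ}

lemma steady_row_complexC (hst : (Smat n).mulVec (rates n lam y) = 0) (i : ℕ) :
    (pad lam (3*i) + pad lam (3*i+2)) * (pad y 0 * pad y (3*i+1) - pad y (3*i+3)) = 0 := by
  by_cases hi : i < n
  · have h := congrFun hst ⟨3*i+3, by omega⟩
    obtain ⟨w0, w1, w2, -⟩ := pad_rates lam y i
    rw [Smat_mulVec_complexC _ hi, w0, w1, w2, Pi.zero_apply] at h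
    linear_combination h
  · simp [pad_of_le lam (by omega : 3*n ≤ 3*i), pad_of_le lam (by omega : 3*n ≤ 3*i+2)]

lemma steady_row_complexD (hst : (Smat n).mulVec (rates n lam y) = 0) (i : ℕ) :
    (pad lam (3*i+1) + pad lam (3*i+2)) * (pad y 2 * pad y (3*i+4) - pad y (3*i+5)) = 0 := by
  by_cases hi : i < n
  · have h := congrFun hst ⟨3*i+5, by omega⟩
    obtain ⟨-, -, -, w3, w4, w5⟩ := pad_rates lam y i
    rw [Smat_mulVec_complexD _ hi, w3, w4, w5, Pi.zero_apply] at h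
    linear_combination h
  · simp [pad_of_le lam (by omega : 3*n ≤ 3*i+1), pad_of_le lam (by omega : 3*n ≤ 3*i+2)]

lemma steady_conversion_succ (hst : (Smat n).mulVec (rates n lam y) = 0) (i : ℕ) :
    pad lam (3*(i+1)+2) * (pad y (3*(i+1)+3) - pad y (3*(i+1)+5)) =
      pad lam (3*i+2) * (pad y (3*i+3) - pad y (3*i+5)) := by
  by_cases hi : i < n
  · have h := congrFun hst ⟨3*i+4, by omega⟩
    obtain ⟨-, -, w2, w3, w4, -⟩ := pad_rates lam y i
    obtain ⟨v0, v1, -, -, -, v5⟩ := pad_rates lam y (i+1)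
    have hC := steady_row_complexC hst (i+1)
    have hD := steady_row_complexD hst i
    rw [Smat_mulVec_substrate _ hi, w2, w3, w4, show 6*i+6 = 6*(i+1) by ring,
      show 6*i+7 = 6*(i+1)+1 by ring, show 6*i+11 = 6*(i+1)+5 by ring, v0, v1, v5,
      Pi.zero_apply] at h
    ring_nf at h hC hD ⊢
    linear_combination -(h + hC + hD)
  · simp [pad_of_le lam (by omega : 3*n ≤ 3*i+2), pad_of_le lam (by omega : 3*n ≤ 3*(i+1)+2)]

lemma steady_conversion_eq_zero (hst : (Smat n).mulVec (rates n lam y) = 0) (i : ℕ) :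
    pad lam (3*i+2) * (pad y (3*i+3) - pad y (3*i+5)) = 0 := by
  set f : ℕ → ℝ := fun j => pad lam (3*j+2) * (pad y (3*j+3) - pad y (3*j+5)) with hf
  have hconst : ∀ j, f j = f 0 := by
    intro j
    induction j with
    | zero => rfl
    | succ j ih => exact (steady_conversion_succ hst j).trans ih
  change f i = 0
  rw [hconst, ← hconst n, hf]
  simp [pad_of_le lam (by omega : 3*n ≤ 3*n+2)]

lemma complexC_eq_of_steady (hlam : ∀ c, 0 < lam c) (hst : (Smat n).mulVec (rates n lam y) = 0)
    {i : ℕ} (hi : i < n) : pad y 0 * pad y (3*i+1) = pad y (3*i+3) := by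
  have h := steady_row_complexC hst i
  rw [pad_of_lt lam (by omega : 3*i < 3*n), pad_of_lt lam (by omega : 3*i+2 < 3*n)] at h
  have := (mul_eq_zero.mp h).resolve_left (add_pos (hlam _) (hlam _)).ne'
  linarith

lemma complexD_eq_of_steady (hlam : ∀ c, 0 < lam c) (hst : (Smat n).mulVec (rates n lam y) = 0)
    {i : ℕ} (hi : i < n) : pad y 2 * pad y (3*i+4) = pad y (3*i+5) := by
  have h := steady_row_complexD hst i
  rw [pad_of_lt lam (by omega : 3*i+1 < 3*n), pad_of_lt lam (by omega : 3*i+2 < 3*n)] at h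
  have := (mul_eq_zero.mp h).resolve_left (add_pos (hlam _) (hlam _)).ne'
  linarith

lemma complexC_eq_complexD_of_steady (hlam : ∀ c, 0 < lam c)
    (hst : (Smat n).mulVec (rates n lam y) = 0) {i : ℕ} (hi : i < n) :
    pad y (3*i+3) = pad y (3*i+5) := by
  have h := steady_conversion_eq_zero hst i
  rw [pad_of_lt lam (by omega : 3*i+2 < 3*n)] at h
  have := (mul_eq_zero.mp h).resolve_left (hlam _).ne'
  linarith

lemma substrate_eq_of_steady (hlam : ∀ c, 0 < lam c) (hy : ∀ m, 0 < y m)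
    (hst : (Smat n).mulVec (rates n lam y) = 0) {q : ℕ} (hq : q ≤ n) :
    pad y (3*q+1) = pad y 1 * (pad y 0 / pad y 2) ^ q := by
  induction q with
  | zero => simp
  | succ q ih =>
    have h2 : pad y 2 ≠ 0 := by rw [pad_of_lt y (by omega)]; exact (hy _).ne'
    have hC := complexC_eq_of_steady hlam hst (by omega : q < n)
    have hD := complexD_eq_of_steady hlam hst (by omega : q < n)
    have hCD := complexC_eq_complexD_of_steady hlam hst (by omega : q < n)
    rw [show 3*(q+1)+1 = 3*q+4 by ring, pow_succ, ← mul_assoc, ← ih (by omega)]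
    field_simp
    linear_combination hD - hCD - hC

lemma complex_eq_of_steady (hlam : ∀ c, 0 < lam c) (hy : ∀ m, 0 < y m)
    (hst : (Smat n).mulVec (rates n lam y) = 0) {p : ℕ} (hp : p < n) :
    pad y (3*p+3) = pad y 0 * pad y 1 * (pad y 0 / pad y 2) ^ p ∧
      pad y (3*p+5) = pad y 0 * pad y 1 * (pad y 0 / pad y 2) ^ p := by
  have hC : pad y (3*p+3) = pad y 0 * pad y 1 * (pad y 0 / pad y 2) ^ p := by
    rw [← complexC_eq_of_steady hlam hst hp, substrate_eq_of_steady hlam hy hst hp.le]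
    ring
  exact ⟨hC, (complexC_eq_complexD_of_steady hlam hst hp).symm.trans hC⟩

end steadyState

section gL

variable {n : ℕ} (g : Fin 3 → ℝ)

lemma pad_gL {j : ℕ} (hj : j < 3*n+3) : pad (gL n g) j =
    g 0 ^ Lmat n ⟨j, hj⟩ 0 * g 1 ^ Lmat n ⟨j, hj⟩ 1 * g 2 ^ Lmat n ⟨j, hj⟩ 2 := by
  rw [pad_of_lt _ hj, gL, Fin.prod_univ_three]

lemma pad_gL_zero : pad (gL n g) 0 = g 0 * g 1 ^ ((n : ℤ) - 1) * (g 2)⁻¹ := by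
  simp [pad_gL, Lmat]

lemma pad_gL_two : pad (gL n g) 2 = g 0 * g 1 ^ ((n : ℤ) - 2) * (g 2)⁻¹ := by
  simp [pad_gL, Lmat]

lemma pad_gL_three_mul_add_one {q : ℕ} (hq : q ≤ n) :
    pad (gL n g) (3*q+1) = (g 0)⁻¹ * g 1 ^ ((q : ℤ) - n) := by
  rcases Nat.eq_zero_or_pos q with rfl | hq0
  · simp [pad_gL, Lmat]
  · simp (disch := omega) only [pad_gL, Lmat, Matrix.of_apply, if_neg, if_pos,
      show (3*q+1)/3 = q by omega]
    simp

lemma pad_gL_three_mul {q : ℕ} (hq0 : 0 < q) (hq : q ≤ n) :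
    pad (gL n g) (3*q) = g 1 ^ ((q : ℤ) - 2) * (g 2)⁻¹ := by
  simp (disch := omega) [pad_gL, Lmat, if_neg]

lemma pad_gL_three_mul_add_two {q : ℕ} (hq0 : 0 < q) (hq : q ≤ n) :
    pad (gL n g) (3*q+2) = g 1 ^ ((q : ℤ) - 2) * (g 2)⁻¹ := by
  simp (disch := omega) only [pad_gL, Lmat, Matrix.of_apply, if_neg,
    show (3*q+2)/3 = q by omega]
  simp

end gL

theorem exists_gL_eq_of_steady {n : ℕ} {lam : Fin (3*n) → ℝ} {y : Fin (3*n+3) → ℝ}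
    (hlam : ∀ c, 0 < lam c) (hy : ∀ m, 0 < y m) (hst : (Smat n).mulVec (rates n lam y) = 0) :
    ∃ g : Fin 3 → ℝ, (∀ c, 0 < g c) ∧ gL n g = y := by
  have hpos : ∀ k < 3*n+3, 0 < pad y k := fun k hk => by rw [pad_of_lt y hk]; exact hy _
  have h0 := hpos 0 (by omega)
  have h1 := hpos 1 (by omega)
  have h2 := hpos 2 (by omega)
  set t := pad y 0 / pad y 2 with ht
  have ht0 : 0 < t := div_pos h0 h2
  set g : Fin 3 → ℝ := ![(pad y 1 * t ^ n)⁻¹, t, (pad y 0 * pad y 1 * t)⁻¹]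
  have hg0 : g 0 = (pad y 1 * t ^ n)⁻¹ := rfl
  have hg1 : g 1 = t := rfl
  have hg2 : g 2 = (pad y 0 * pad y 1 * t)⁻¹ := rfl
  refine ⟨g, fun c => ?_, ?_⟩
  · fin_cases c
    · exact inv_pos.mpr (by positivity)
    · exact ht0
    · exact inv_pos.mpr (by positivity)
  funext j
  obtain ⟨j, hj⟩ := j
  rw [← pad_of_lt (gL n g) hj, ← pad_of_lt y hj]
  obtain ⟨q, r, hr, rfl⟩ : ∃ q r, r < 3 ∧ j = 3*q+r :=
    ⟨j/3, j%3, Nat.mod_lt _ (by norm_num), (Nat.div_add_mod j 3).symm⟩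
  have hq : q ≤ n := by omega
  interval_cases r
  · rcases q with _ | p
    · rw [show 3*0+0 = 0 from rfl, pad_gL_zero, hg0, hg1, hg2, zpow_sub₀ ht0.ne', zpow_natCast]
      field_simp
    · rw [show 3*(p+1)+0 = 3*(p+1) from rfl, pad_gL_three_mul _ (by omega) hq,
        show 3*(p+1) = 3*p+3 by ring, (complex_eq_of_steady hlam hy hst (by omega)).1, ← ht, hg1,
        hg2, zpow_sub₀ ht0.ne', zpow_natCast]
      field_simp
      ring
  · rw [pad_gL_three_mul_add_one _ hq, substrate_eq_of_steady hlam hy hst hq, ← ht, hg0, hg1,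
      zpow_sub₀ ht0.ne', zpow_natCast, zpow_natCast]
    field_simp
  · rcases q with _ | p
    · rw [show 3*0+2 = 2 from rfl, pad_gL_two, hg0, hg1, hg2, zpow_sub₀ ht0.ne', zpow_natCast, ht]
      field_simp
    · rw [pad_gL_three_mul_add_two _ (by omega) hq, show 3*(p+1)+2 = 3*p+5 by ring,
        (complex_eq_of_steady hlam hy hst (by omega)).2, ← ht, hg1, hg2, zpow_sub₀ ht0.ne',
        zpow_natCast]
      field_simp
      ring

section conservation

variable {n : ℕ} (x : Fin (3*n+3) → ℝ)

lemma Zmat_mulVec_eq_sum_blocks (r : Fin 3) : (Zmat n).mulVec x r = ∑ q ∈ range (n+1),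
    (pad (Zmat n r) (3*q) * pad x (3*q) + pad (Zmat n r) (3*q+1) * pad x (3*q+1)
      + pad (Zmat n r) (3*q+2) * pad x (3*q+2)) := by
  rw [mulVec_apply_eq_sum_range]
  refine (sum_range_mul 3 (n+1) _).trans (sum_congr rfl fun q _ => ?_)
  simp [sum_range_succ]

lemma pad_Zmat_apply (r : Fin 3) {j : ℕ} (hj : j < 3*n+3) : pad (Zmat n r) j =
    if (r : ℕ) = 0 then (if j % 3 = 0 then 1 else 0)
    else if (r : ℕ) = 1 then (if j % 3 = 1 then 1 else if j = 0 ∨ j = 2 then -1 else 0)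
    else (if j % 3 = 2 then 1 else 0) := by
  rw [pad_of_lt _ hj]
  rfl

lemma Zmat_mulVec_apply_zero : (Zmat n).mulVec x 0 = ∑ q ∈ range (n+1), pad x (3*q) := by
  rw [Zmat_mulVec_eq_sum_blocks]
  refine sum_congr rfl fun q hq => ?_
  have hq : q < n+1 := mem_range.mp hq
  simp (disch := omega) [pad_Zmat_apply]

lemma Zmat_mulVec_apply_two : (Zmat n).mulVec x 2 = ∑ q ∈ range (n+1), pad x (3*q+2) := by
  rw [Zmat_mulVec_eq_sum_blocks]
  refine sum_congr rfl fun q hq => ?_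
  have hq : q < n+1 := mem_range.mp hq
  simp (disch := omega) [pad_Zmat_apply]

lemma Zmat_mulVec_apply_one :
    (Zmat n).mulVec x 1 = ∑ q ∈ range (n+1), pad x (3*q+1) - pad x 0 - pad x 2 := by
  rw [Zmat_mulVec_eq_sum_blocks]
  have hblock : ∀ q ∈ range (n+1),
      pad (Zmat n 1) (3*q) * pad x (3*q) + pad (Zmat n 1) (3*q+1) * pad x (3*q+1)
        + pad (Zmat n 1) (3*q+2) * pad x (3*q+2) =
        pad x (3*q+1) - if q = 0 then pad x 0 + pad x 2 else 0 := by
    intro q hq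
    have hq : q < n+1 := mem_range.mp hq
    rcases Nat.eq_zero_or_pos q with rfl | hq0
    · obtain ⟨e0, e1, e2⟩ :
          pad (Zmat n 1) 0 = -1 ∧ pad (Zmat n 1) 1 = 1 ∧ pad (Zmat n 1) 2 = -1 := by
        simp (disch := omega) [pad_Zmat_apply]
      simp only [mul_zero, zero_add, e0, e1, e2, ↓reduceIte]
      ring
    · obtain ⟨e0, e1, e2⟩ : pad (Zmat n 1) (3*q) = 0 ∧ pad (Zmat n 1) (3*q+1) = 1 ∧
          pad (Zmat n 1) (3*q+2) = 0 := by
        refine ⟨?_, ?_, ?_⟩ <;> simp (disch := omega) [pad_Zmat_apply, if_neg]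
      simp [e0, e1, e2, hq0.ne']
  rw [sum_congr rfl hblock, sum_sub_distrib, sum_ite_eq' (range (n+1)) 0]
  simp only [mem_range, Nat.zero_lt_succ, ↓reduceIte]
  ring

end conservation

lemma Zmat_mulVec_one {n : ℕ} :
    (Zmat n).mulVec 1 = ![(n : ℝ) + 1, (n : ℝ) - 1, (n : ℝ) + 1] := by
  have hone : ∀ k < 3*n+3, pad (1 : Fin (3*n+3) → ℝ) k = 1 := fun k hk => pad_of_lt _ hk
  ext r
  fin_cases r
  · simp [Zmat_mulVec_apply_zero, sum_congr rfl fun q (hq : q ∈ range (n+1)) =>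
      hone (3*q) (by have := mem_range.mp hq; omega)]
  · simp [Zmat_mulVec_apply_one, hone, sum_congr rfl fun q (hq : q ∈ range (n+1)) =>
      hone (3*q+1) (by have := mem_range.mp hq; omega)]
  · simp [Zmat_mulVec_apply_two, sum_congr rfl fun q (hq : q ∈ range (n+1)) =>
      hone (3*q+2) (by have := mem_range.mp hq; omega)]

lemma Theta_eq_sub {n : ℕ} (g : Fin 3 → ℝ) (a : Fin (3*n+3) → ℝ) :
    Theta n g a = (Zmat n).mulVec (a * gL n g) - (Zmat n).mulVec a := by
  rw [Theta, ← Matrix.mulVec_sub]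
  congr 1
  funext j
  simp only [Pi.mul_apply, Pi.sub_apply]
  ring

lemma eq_one_of_balance {N u w : ℝ} (hN : 0 ≤ N) (hu : 0 < u) (hw : 0 < w)
    (h0 : u / w + N / w = N + 1) (h1 : (N + 1) / u - 2 * (u / w) = N - 1) : u = 1 ∧ w = 1 := by
  field_simp at h0 h1
  have key : (1 - u) * (2 * N * u + (N + 1) ^ 2 * w) = 0 := by
    linear_combination (N + 1) * h1 + 2 * u * h0
  have hu1 : u = 1 := by
    have : 0 < 2 * N * u + (N + 1) ^ 2 * w := by positivity
    linarith [(mul_eq_zero.mp key).resolve_right this.ne']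
  refine ⟨hu1, ?_⟩
  subst hu1
  have : (w - 1) * (N + 1) = 0 := by linarith
  linarith [(mul_eq_zero.mp this).resolve_right (by positivity)]

lemma eq_one_of_Zmat_mulVec_gL {n : ℕ} {g : Fin 3 → ℝ} (hg : ∀ c, 0 < g c)
    (h : (Zmat n).mulVec (gL n g) = (Zmat n).mulVec 1) : g = 1 := by
  rw [Zmat_mulVec_one] at h
  have h0 := congrFun h 0
  have h1 := congrFun h 1
  have h2 := congrFun h 2
  simp only [Zmat_mulVec_apply_zero, Zmat_mulVec_apply_one, Zmat_mulVec_apply_two] at h0 h1 h2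
  rw [sum_range_succ'] at h0 h2
  have htail : ∀ q ∈ range n, pad (gL n g) (3*(q+1)) = pad (gL n g) (3*(q+1)+2) := by
    intro q hq
    have hq : q < n := mem_range.mp hq
    rw [pad_gL_three_mul g (by omega) (by omega), pad_gL_three_mul_add_two g (by omega) (by omega)]
  rw [sum_congr rfl htail] at h0
  have hg1 : g 1 = 1 := by
    have h02 : pad (gL n g) 0 = pad (gL n g) 2 := by simpa using h0.trans h2.symm
    rw [pad_gL_zero, pad_gL_two, show (n : ℤ) - 1 = (n - 2) + 1 by ring,
      zpow_add_one₀ (hg 1).ne'] at h02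
    have := (hg 0).ne'
    have := (hg 2).ne'
    have := zpow_ne_zero ((n : ℤ) - 2) (hg 1).ne'
    field_simp at h02
    linear_combination h02
  have hD : ∀ q ∈ range n, pad (gL n g) (3*(q+1)+2) = (g 2)⁻¹ := by
    intro q hq
    have hq : q < n := mem_range.mp hq
    rw [pad_gL_three_mul_add_two g (by omega) (by omega), hg1, one_zpow, one_mul]
  have hS : ∀ q ∈ range (n+1), pad (gL n g) (3*q+1) = (g 0)⁻¹ := by
    intro q hq
    have hq : q < n+1 := mem_range.mp hq
    rw [pad_gL_three_mul_add_one g (by omega), hg1, one_zpow, mul_one]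
  rw [sum_congr rfl hD, mul_zero, pad_gL_zero, hg1] at h0
  rw [sum_congr rfl hS, pad_gL_zero, pad_gL_two, hg1] at h1
  simp only [sum_const, card_range, nsmul_eq_mul, one_zpow, mul_one, Matrix.cons_val_zero,
    Matrix.cons_val_one] at h0 h1
  obtain ⟨hu, hw⟩ := eq_one_of_balance n.cast_nonneg (hg 0) (hg 2)
    (by linear_combination h0) (by push_cast at h1; linear_combination h1)
  ext c
  fin_cases c <;> simp [hu, hg1, hw]

section constant

variable {n : ℕ} {α : ℝ}

lemma av_const {j : ℕ} (hj : j - 1 < 3*n+3) : av n (fun _ => α) j = α := dif_pos hj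

lemma om1_const : om1 n (fun _ => α) = (n + 1) * α := by
  simp [om1, sum_congr rfl fun k (hk : k ∈ range (n+1)) =>
    av_const (α := α) (by have := mem_range.mp hk; omega : 1 + 3*k - 1 < 3*n+3)]

lemma om3_const : om3 n (fun _ => α) = (n + 1) * α := by
  simp [om3, sum_congr rfl fun k (hk : k ∈ range (n+1)) =>
    av_const (α := α) (by have := mem_range.mp hk; omega : 3 + 3*k - 1 < 3*n+3)]

lemma Om2_const (ξ : ℝ) : Om2 n (fun _ => α) ξ = α * ∑ k ∈ range (n+1), ξ ^ k := by
  rw [Om2, mul_sum]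
  exact sum_congr rfl fun k hk => by rw [av_const (by have := mem_range.mp hk; omega)]

lemma Om4_const (ξ : ℝ) : Om4 n (fun _ => α) ξ = α * ∑ k ∈ range n, ξ ^ k := by
  rw [Om4, ← Ico_add_one_right_eq_Icc, sum_Ico_eq_sum_range, mul_sum]
  exact sum_congr rfl fun k hk => by
    rw [av_const (by have := mem_range.mp hk; omega), add_tsub_cancel_left]

lemma Om6_const (ξ : ℝ) : Om6 n (fun _ => α) ξ = α * ∑ k ∈ range n, ξ ^ k := by
  rw [Om6, ← Ico_add_one_right_eq_Icc, sum_Ico_eq_sum_range, mul_sum]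
  exact sum_congr rfl fun k hk => by
    rw [av_const (by have := mem_range.mp hk; omega), add_tsub_cancel_left]

lemma F1_const (ξ : ℝ) : F1 n (fun _ => α) ξ = 0 := by
  rw [F1, Om4_const, Om6_const, om1_const, om3_const]
  ring

lemma Pp_const (hα : α ≠ 0) (ξ : ℝ) :
    Pp n (fun _ => α) ξ = 2 * α^2 / ((n : ℝ) + 1)^2 * (ξ^n - 1) * (ξ^(n+1) - 1) := by
  rw [Pp, F1_const, Ap, Dlt, Om4_const, Om6_const, Om2_const, om1_const, om3_const,
    av_const (by omega), av_const (by omega), ← geom_sum_mul, ← geom_sum_mul]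
  field_simp
  ring

lemma Pp_const_eq_zero_iff (hn : n ≠ 0) (hα : α ≠ 0) {ξ : ℝ} (hξ : 0 < ξ) :
    Pp n (fun _ => α) ξ = 0 ↔ ξ = 1 := by
  rw [Pp_const hα, mul_eq_zero, mul_eq_zero, sub_eq_zero, sub_eq_zero,
    pow_eq_one_iff_of_nonneg hξ.le hn, pow_eq_one_iff_of_nonneg hξ.le (by omega)]
  have : 2 * α ^ 2 / ((n : ℝ) + 1) ^ 2 ≠ 0 := by positivity
  tauto

open Polynomial in
lemma exists_poly_Pp_const_rootMultiplicity (hn : n ≠ 0) (hα : α ≠ 0) :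
    ∃ p : ℝ[X], (∀ ξ : ℝ, Pp n (fun _ => α) ξ = p.eval ξ) ∧ p.rootMultiplicity 1 = 2 := by
  set q : ℝ[X] := C (2 * α^2 / ((n : ℝ) + 1)^2) * (∑ i ∈ range n, X ^ i) *
    (∑ i ∈ range (n+1), X ^ i)
  have hq1 : q.eval 1 ≠ 0 := by simp [q, hα, hn, Nat.cast_add_one_ne_zero]
  refine ⟨q * (X - C 1) ^ 2, fun ξ => ?_, ?_⟩
  · simp only [Pp_const hα, q, eval_mul, eval_pow, eval_sub, eval_X, eval_C, eval_geom_sum,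
      ← geom_sum_mul]
    ring
  · rw [rootMultiplicity_mul_X_sub_C_pow (fun h => hq1 (by simp [h])),
      rootMultiplicity_eq_zero hq1]

lemma Theta_const_eq_zero_iff (hα : α ≠ 0) {g : Fin 3 → ℝ} (hg : ∀ c, 0 < g c) :
    Theta n g (fun _ => α) = 0 ↔ g = fun _ => 1 := by
  have hconst : (fun _ => α : Fin (3*n+3) → ℝ) = α • 1 := by funext; simp
  rw [Theta_eq_sub, sub_eq_zero, hconst, smul_mul_assoc, one_mul, Matrix.mulVec_smul,
    Matrix.mulVec_smul, (smul_right_injective _ hα).eq_iff]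
  refine ⟨eq_one_of_Zmat_mulVec_gL hg, ?_⟩
  rintro rfl
  congr 1
  funext j
  simp [gL]

end constant

/-- For `a = α·𝟙` with `α > 0`: `F1 ≡ 0`,
`P(ξ) = (2α²/(n+1)²)(ξⁿ−1)(ξ^{n+1}−1)` whose only positive zero is `ξ = 1`
(a zero of multiplicity two), the only `g ∈ ℝ_{>0}³` with `Θ(g,a) = 0` is
`g = (1,1,1)`, and for every `λ ∈ ℝ_{>0}^{3n}` the vector `a` is the unique
positive steady state of `ẋ = S diag(κ(a,λ)) Φ(x)` in the coset `Z x = Z a`. -/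
theorem constant_vector_unique_steady_state (n : ℕ) (hn : 2 ≤ n)
    (α : ℝ) (hα : 0 < α) :
    (∀ ξ : ℝ, F1 n (fun _ => α) ξ = 0) ∧
    (∀ ξ : ℝ, Pp n (fun _ => α) ξ =
      2 * α^2 / ((n : ℝ) + 1)^2 * (ξ^n - 1) * (ξ^(n+1) - 1)) ∧
    (∀ ξ : ℝ, 0 < ξ → (Pp n (fun _ => α) ξ = 0 ↔ ξ = 1)) ∧
    (∃ p : Polynomial ℝ, (∀ ξ : ℝ, Pp n (fun _ => α) ξ = p.eval ξ) ∧
      p.rootMultiplicity 1 = 2) ∧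
    (∀ g : Fin 3 → ℝ, (∀ i, 0 < g i) →
      (Theta n g (fun _ => α) = 0 ↔ g = fun _ => 1)) ∧
    (∀ lam : Fin (3*n) → ℝ, (∀ c, 0 < lam c) →
      isSteady n (kappaOf n (fun _ => α) lam) (fun _ => α) ∧
      ∀ b : Fin (3*n+3) → ℝ, (∀ j, 0 < b j) →
        isSteady n (kappaOf n (fun _ => α) lam) b →
        (Zmat n).mulVec b = (Zmat n).mulVec (fun _ => α) →
        b = fun _ => α) := by
  have hα0 : α ≠ 0 := hα.ne'
  have hn0 : n ≠ 0 := by omega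
  refine ⟨F1_const, Pp_const hα0, fun ξ => Pp_const_eq_zero_iff hn0 hα0,
    exists_poly_Pp_const_rootMultiplicity hn0 hα0, fun g => Theta_const_eq_zero_iff hα0,
    fun lam hlam => ⟨isSteady_kappaOf_self (fun _ => hα0) lam, fun b hb hst hZ => ?_⟩⟩
  rw [isSteady_kappaOf_iff] at hst
  obtain ⟨g, hg, hgb⟩ := exists_gL_eq_of_steady hlam (fun m => div_pos (hb m) hα) hst
  have hb_eq : b = (fun _ => α) * gL n g := by
    rw [hgb]
    funext m
    simp [mul_div_cancel₀ _ hα0]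
  have hg1 : g = fun _ => 1 := by
    rw [← Theta_const_eq_zero_iff hα0 hg, Theta_eq_sub, ← hb_eq, hZ, sub_self]
  rw [hb_eq, hg1]
  funext m
  simp [gL]

end Phos
end

section
/- (Reconstruction of steady state ratios) Let κ ∈ ℝ_{>0}^{6n} and let a, b ∈ ℝ_{>0}^{3+3n} be two positive steady states of ẋ = S diag(κ) Φ(x) (i.e., S diag(κ)Φ(a) = S diag(κ)Φ(b) = 0) with Z(b − a) = 0. Set ξ := (b_1/a_1)/(b_3/a_3). Then b_4/a_4 = (b_2/a_2)(b_1/a_1), b_5/a_5 = ξ (b_2/a_2), b_6/a_6 = ξ (b_2/a_2)(b_3/a_3), and for every i = 1,…,n, (b_{1+3i}/a_{1+3i}, b_{2+3i}/a_{2+3i}, b_{3+3i}/a_{3+3i}) = ξ^{i−1} (b_4/a_4, b_5/a_5, b_6/a_6). In particular, all componentwise ratios b_j/a_j (j = 4,…,3+3n) are determined by the three ratios b_1/a_1, b_2/a_2, b_3/a_3, and b_{1+3i}/a_{1+3i} = b_{3+3i}/a_{3+3i} for i = 1,…,n. -/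
open Finset

namespace Phos

set_option linter.dupNamespace false
open Finset

/-- 0-based component accessor. -/
noncomputable def Xc (n : ℕ) (x : Fin (3*n+3) → ℝ) (j : ℕ) : ℝ :=
  if h : j < 3*n+3 then x ⟨j, h⟩ else 0

/-- 0-based rate accessor. -/
noncomputable def Kc (n : ℕ) (κ : Fin (6*n) → ℝ) (j : ℕ) : ℝ :=
  if h : j < 6*n then κ ⟨j, h⟩ else 0

lemma av_eq_Xc (n : ℕ) (a : Fin (3*n+3) → ℝ) (j : ℕ) : av n a j = Xc n a (j-1) := rfl

lemma Xc_pos (n : ℕ) (x : Fin (3*n+3) → ℝ) (hx : ∀ j, 0 < x j) (j : ℕ) (h : j < 3*n+3) :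
    0 < Xc n x j := by simp [Xc, h]; exact hx _

lemma Kc_pos (n : ℕ) (κ : Fin (6*n) → ℝ) (hκ : ∀ r, 0 < κ r) (j : ℕ) (h : j < 6*n) :
    0 < Kc n κ j := by simp [Kc, h]; exact hκ _

lemma sum_range_six_mul (g : ℕ → ℝ) (n : ℕ) :
    ∑ r ∈ Finset.range (6*n), g r = ∑ i ∈ Finset.range n, ∑ s ∈ Finset.range 6, g (6*i+s) := by
  induction n with
  | zero => simp
  | succ k ih =>
    rw [Finset.sum_range_succ, ← ih, show 6*(k+1) = 6*k+1+1+1+1+1+1 by ring]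
    simp [Finset.sum_range_succ]
    ring

lemma sum_blocks (n : ℕ) (f : Fin (6*n) → ℝ) :
    ∑ r, f r = ∑ i ∈ Finset.range n, ∑ s ∈ Finset.range 6,
      (if h : 6*i+s < 6*n then f ⟨6*i+s, h⟩ else 0) := by
  have h1 : ∑ r : Fin (6*n), f r
      = ∑ r ∈ Finset.range (6*n), (if h : r < 6*n then f ⟨r, h⟩ else 0) := by
    rw [← Fin.sum_univ_eq_sum_range]
    exact Finset.sum_congr rfl fun r _ => by rw [dif_pos r.isLt]
  rw [h1, sum_range_six_mul]

lemma prod_pow_eN_s18 (n : ℕ) (x : Fin (3*n+3) → ℝ) (t : ℕ) (h1 : 1 ≤ t) (h2 : t ≤ 3*n+3) :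
    ∏ m, x m ^ (eN (3*n+3) t m) = Xc n x (t-1) := by
  rw [Finset.prod_eq_single (⟨t-1, by omega⟩ : Fin (3*n+3))]
  · simp [eN, Xc, show t-1+1 = t by omega, show t-1 < 3*n+3 by omega]
  · intro m _ hm
    have : (m : ℕ) + 1 ≠ t := by
      intro h
      apply hm
      apply Fin.ext
      simp
      omega
    simp [eN, this]
  · simp

lemma prod_pow_eN_add (n : ℕ) (x : Fin (3*n+3) → ℝ) (t t' : ℕ)
    (h1 : 1 ≤ t) (h2 : t ≤ 3*n+3) (h1' : 1 ≤ t') (h2' : t' ≤ 3*n+3) :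
    ∏ m, x m ^ (eN (3*n+3) t m + eN (3*n+3) t' m) = Xc n x (t-1) * Xc n x (t'-1) := by
  simp only [pow_add]
  rw [Finset.prod_mul_distrib, prod_pow_eN_s18 n x t h1 h2, prod_pow_eN_s18 n x t' h1' h2']
section vec6
variable {α : Type*} (v0 v1 v2 v3 v4 v5 : α)
lemma vec6_0 (h : (0:ℕ) < 6) : ![v0,v1,v2,v3,v4,v5] ⟨0,h⟩ = v0 := rfl
lemma vec6_1 (h : (1:ℕ) < 6) : ![v0,v1,v2,v3,v4,v5] ⟨1,h⟩ = v1 := rfl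
lemma vec6_2 (h : (2:ℕ) < 6) : ![v0,v1,v2,v3,v4,v5] ⟨2,h⟩ = v2 := rfl
lemma vec6_3 (h : (3:ℕ) < 6) : ![v0,v1,v2,v3,v4,v5] ⟨3,h⟩ = v3 := rfl
lemma vec6_4 (h : (4:ℕ) < 6) : ![v0,v1,v2,v3,v4,v5] ⟨4,h⟩ = v4 := rfl
lemma vec6_5 (h : (5:ℕ) < 6) : ![v0,v1,v2,v3,v4,v5] ⟨5,h⟩ = v5 := rfl
end vec6

lemma Phi_eval0 (n i : ℕ) (h : 6*i+0 < 6*n) (x : Fin (3*n+3) → ℝ) :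
    Phi n x ⟨6*i+0, h⟩ = Xc n x 0 * Xc n x (3*i+1) := by
  have hi : i < n := by omega
  unfold Phi Ymat
  simp only [Matrix.of_apply, Fin.val_mk]
  simp only [show (6*i+0)%6 = 0 by omega, show (6*i+0)/6+1 = i+1 by omega, vec6_0, Pi.add_apply]
  rw [show 3*(i+1)-1 = 3*i+2 by omega,
    prod_pow_eN_add n x 1 (3*i+2) (by omega) (by omega) (by omega) (by omega)]
  norm_num

lemma Phi_eval1 (n i : ℕ) (h : 6*i+1 < 6*n) (x : Fin (3*n+3) → ℝ) :
    Phi n x ⟨6*i+1, h⟩ = Xc n x (3*i+3) := by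
  have hi : i < n := by omega
  unfold Phi Ymat
  simp only [Matrix.of_apply, Fin.val_mk]
  simp only [show (6*i+1)%6 = 1 by omega, show (6*i+1)/6+1 = i+1 by omega, vec6_1]
  rw [show 1+3*(i+1) = 3*i+4 by omega, prod_pow_eN_s18 n x (3*i+4) (by omega) (by omega)]
  norm_num

lemma Phi_eval2 (n i : ℕ) (h : 6*i+2 < 6*n) (x : Fin (3*n+3) → ℝ) :
    Phi n x ⟨6*i+2, h⟩ = Xc n x (3*i+3) := by
  have hi : i < n := by omega
  unfold Phi Ymat
  simp only [Matrix.of_apply, Fin.val_mk]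
  simp only [show (6*i+2)%6 = 2 by omega, show (6*i+2)/6+1 = i+1 by omega, vec6_2]
  rw [show 1+3*(i+1) = 3*i+4 by omega, prod_pow_eN_s18 n x (3*i+4) (by omega) (by omega)]
  norm_num

lemma Phi_eval3 (n i : ℕ) (h : 6*i+3 < 6*n) (x : Fin (3*n+3) → ℝ) :
    Phi n x ⟨6*i+3, h⟩ = Xc n x 2 * Xc n x (3*i+4) := by
  have hi : i < n := by omega
  unfold Phi Ymat
  simp only [Matrix.of_apply, Fin.val_mk]
  simp only [show (6*i+3)%6 = 3 by omega, show (6*i+3)/6+1 = i+1 by omega, vec6_3, Pi.add_apply]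
  rw [show 2+3*(i+1) = 3*i+5 by omega,
    prod_pow_eN_add n x 3 (3*i+5) (by omega) (by omega) (by omega) (by omega)]
  norm_num

lemma Phi_eval4 (n i : ℕ) (h : 6*i+4 < 6*n) (x : Fin (3*n+3) → ℝ) :
    Phi n x ⟨6*i+4, h⟩ = Xc n x (3*i+5) := by
  have hi : i < n := by omega
  unfold Phi Ymat
  simp only [Matrix.of_apply, Fin.val_mk]
  simp only [show (6*i+4)%6 = 4 by omega, show (6*i+4)/6+1 = i+1 by omega, vec6_4]
  rw [show 3+3*(i+1) = 3*i+6 by omega, prod_pow_eN_s18 n x (3*i+6) (by omega) (by omega)]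
  norm_num

lemma Phi_eval5 (n i : ℕ) (h : 6*i+5 < 6*n) (x : Fin (3*n+3) → ℝ) :
    Phi n x ⟨6*i+5, h⟩ = Xc n x (3*i+5) := by
  have hi : i < n := by omega
  unfold Phi Ymat
  simp only [Matrix.of_apply, Fin.val_mk]
  simp only [show (6*i+5)%6 = 5 by omega, show (6*i+5)/6+1 = i+1 by omega, vec6_5]
  rw [show 3+3*(i+1) = 3*i+6 by omega, prod_pow_eN_s18 n x (3*i+6) (by omega) (by omega)]
  norm_num
lemma Smat_eval0 (n i : ℕ) (h : 6*i+0 < 6*n) (m : Fin (3*n+3)) :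
    Smat n m ⟨6*i+0, h⟩ = e (3*n+3) (3*i+4) m - e (3*n+3) 1 m - e (3*n+3) (3*i+2) m := by
  unfold Smat
  simp only [Matrix.of_apply, Fin.val_mk]
  simp only [show (6*i+0)%6 = 0 by omega, show (6*i+0)/6+1 = i+1 by omega, vec6_0,
    Pi.sub_apply, show 1+3*(i+1) = 3*i+4 by omega, show 3*(i+1)-1 = 3*i+2 by omega]

lemma Smat_eval1 (n i : ℕ) (h : 6*i+1 < 6*n) (m : Fin (3*n+3)) :
    Smat n m ⟨6*i+1, h⟩ = e (3*n+3) 1 m + e (3*n+3) (3*i+2) m - e (3*n+3) (3*i+4) m := by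
  unfold Smat
  simp only [Matrix.of_apply, Fin.val_mk]
  simp only [show (6*i+1)%6 = 1 by omega, show (6*i+1)/6+1 = i+1 by omega, vec6_1,
    Pi.sub_apply, Pi.add_apply, show 1+3*(i+1) = 3*i+4 by omega, show 3*(i+1)-1 = 3*i+2 by omega]

lemma Smat_eval2 (n i : ℕ) (h : 6*i+2 < 6*n) (m : Fin (3*n+3)) :
    Smat n m ⟨6*i+2, h⟩ = e (3*n+3) 1 m + e (3*n+3) (3*i+5) m - e (3*n+3) (3*i+4) m := by
  unfold Smat
  simp only [Matrix.of_apply, Fin.val_mk]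
  simp only [show (6*i+2)%6 = 2 by omega, show (6*i+2)/6+1 = i+1 by omega, vec6_2,
    Pi.sub_apply, Pi.add_apply, show 1+3*(i+1) = 3*i+4 by omega, show 2+3*(i+1) = 3*i+5 by omega]

lemma Smat_eval3 (n i : ℕ) (h : 6*i+3 < 6*n) (m : Fin (3*n+3)) :
    Smat n m ⟨6*i+3, h⟩ = e (3*n+3) (3*i+6) m - e (3*n+3) 3 m - e (3*n+3) (3*i+5) m := by
  unfold Smat
  simp only [Matrix.of_apply, Fin.val_mk]
  simp only [show (6*i+3)%6 = 3 by omega, show (6*i+3)/6+1 = i+1 by omega, vec6_3,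
    Pi.sub_apply, show 3+3*(i+1) = 3*i+6 by omega, show 2+3*(i+1) = 3*i+5 by omega]

lemma Smat_eval4 (n i : ℕ) (h : 6*i+4 < 6*n) (m : Fin (3*n+3)) :
    Smat n m ⟨6*i+4, h⟩ = e (3*n+3) 3 m + e (3*n+3) (3*i+5) m - e (3*n+3) (3*i+6) m := by
  unfold Smat
  simp only [Matrix.of_apply, Fin.val_mk]
  simp only [show (6*i+4)%6 = 4 by omega, show (6*i+4)/6+1 = i+1 by omega, vec6_4,
    Pi.sub_apply, Pi.add_apply, show 3+3*(i+1) = 3*i+6 by omega, show 2+3*(i+1) = 3*i+5 by omega]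

lemma Smat_eval5 (n i : ℕ) (h : 6*i+5 < 6*n) (m : Fin (3*n+3)) :
    Smat n m ⟨6*i+5, h⟩ = e (3*n+3) 3 m + e (3*n+3) (3*i+2) m - e (3*n+3) (3*i+6) m := by
  unfold Smat
  simp only [Matrix.of_apply, Fin.val_mk]
  simp only [show (6*i+5)%6 = 5 by omega, show (6*i+5)/6+1 = i+1 by omega, vec6_5,
    Pi.sub_apply, Pi.add_apply, show 3+3*(i+1) = 3*i+6 by omega, show 3*(i+1)-1 = 3*i+2 by omega]

lemma e_one (n t k : ℕ) (hk : k < 3*n+3) (ht : k+1 = t) : e (3*n+3) t ⟨k,hk⟩ = 1 := by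
  simp [e, ht]

lemma e_zero (n t k : ℕ) (hk : k < 3*n+3) (ht : k+1 ≠ t) : e (3*n+3) t ⟨k,hk⟩ = 0 := by
  simp [e, ht]
lemma Kc_eval (n : ℕ) (κ : Fin (6*n) → ℝ) (j : ℕ) (h : j < 6*n) :
    κ ⟨j, h⟩ = Kc n κ j := by simp [Kc, h]

/-- The contribution of block `i` to row `m` of `S diag(κ) Φ(x)`. -/
noncomputable def blockT (n : ℕ) (κ : Fin (6*n) → ℝ) (x : Fin (3*n+3) → ℝ)
    (m : Fin (3*n+3)) (i : ℕ) : ℝ :=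
      (e (3*n+3) (3*i+4) m - e (3*n+3) 1 m - e (3*n+3) (3*i+2) m)
          * (Kc n κ (6*i+0) * (Xc n x 0 * Xc n x (3*i+1)))
      + (e (3*n+3) 1 m + e (3*n+3) (3*i+2) m - e (3*n+3) (3*i+4) m)
          * (Kc n κ (6*i+1) * Xc n x (3*i+3))
      + (e (3*n+3) 1 m + e (3*n+3) (3*i+5) m - e (3*n+3) (3*i+4) m)
          * (Kc n κ (6*i+2) * Xc n x (3*i+3))
      + (e (3*n+3) (3*i+6) m - e (3*n+3) 3 m - e (3*n+3) (3*i+5) m)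
          * (Kc n κ (6*i+3) * (Xc n x 2 * Xc n x (3*i+4)))
      + (e (3*n+3) 3 m + e (3*n+3) (3*i+5) m - e (3*n+3) (3*i+6) m)
          * (Kc n κ (6*i+4) * Xc n x (3*i+5))
      + (e (3*n+3) 3 m + e (3*n+3) (3*i+2) m - e (3*n+3) (3*i+6) m)
          * (Kc n κ (6*i+5) * Xc n x (3*i+5))

lemma steady_rows (n : ℕ) (κ : Fin (6*n) → ℝ) (x : Fin (3*n+3) → ℝ)
    (hst : isSteady n κ x) (m : Fin (3*n+3)) :
    ∑ i ∈ Finset.range n, blockT n κ x m i = 0 := by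
  have h := congrFun hst m
  simp only [Matrix.mulVec, dotProduct, Pi.zero_apply] at h
  rw [sum_blocks] at h
  rw [← h]
  refine Finset.sum_congr rfl fun i hi => ?_
  have hi' : i < n := Finset.mem_range.mp hi
  rw [Finset.sum_range_succ, Finset.sum_range_succ, Finset.sum_range_succ,
    Finset.sum_range_succ, Finset.sum_range_succ, Finset.sum_range_succ,
    Finset.sum_range_zero]
  rw [dif_pos (show 6*i+0 < 6*n by omega), dif_pos (show 6*i+1 < 6*n by omega),
    dif_pos (show 6*i+2 < 6*n by omega), dif_pos (show 6*i+3 < 6*n by omega),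
    dif_pos (show 6*i+4 < 6*n by omega), dif_pos (show 6*i+5 < 6*n by omega)]
  rw [Smat_eval0, Smat_eval1, Smat_eval2, Smat_eval3, Smat_eval4, Smat_eval5,
    Phi_eval0, Phi_eval1, Phi_eval2, Phi_eval3, Phi_eval4, Phi_eval5]
  simp only [Kc_eval n κ]
  unfold blockT
  ring

/-- Steady state equation for the complex `ES_{i0}` (species `3 i0 + 4`, 1-based). -/
lemma eqA (n : ℕ) (κ : Fin (6*n) → ℝ) (x : Fin (3*n+3) → ℝ)
    (hst : isSteady n κ x) (i0 : ℕ) (hi0 : i0 < n) :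
    Kc n κ (6*i0+0) * (Xc n x 0 * Xc n x (3*i0+1))
      = Kc n κ (6*i0+1) * Xc n x (3*i0+3) + Kc n κ (6*i0+2) * Xc n x (3*i0+3) := by
  have h := steady_rows n κ x hst ⟨3*i0+3, by omega⟩
  have key : ∀ i ∈ Finset.range n, blockT n κ x ⟨3*i0+3, by omega⟩ i
      = if i = i0 then
          (Kc n κ (6*i0+0) * (Xc n x 0 * Xc n x (3*i0+1))
            - Kc n κ (6*i0+1) * Xc n x (3*i0+3) - Kc n κ (6*i0+2) * Xc n x (3*i0+3))
        else 0 := by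
    intro i hi
    unfold blockT
    by_cases hii : i = i0
    · subst hii
      rw [if_pos rfl]
      simp (disch := omega) only [e_one, e_zero]
      ring
    · simp (disch := omega) only [e_zero]
      simp [hii]
  rw [Finset.sum_congr rfl key, Finset.sum_ite_eq' (Finset.range n) i0] at h
  rw [if_pos (Finset.mem_range.mpr hi0)] at h
  linarith

/-- Steady state equation for the complex `FS_{i0+1}` (species `3 i0 + 6`, 1-based). -/
lemma eqB (n : ℕ) (κ : Fin (6*n) → ℝ) (x : Fin (3*n+3) → ℝ)
    (hst : isSteady n κ x) (i0 : ℕ) (hi0 : i0 < n) :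
    Kc n κ (6*i0+3) * (Xc n x 2 * Xc n x (3*i0+4))
      = Kc n κ (6*i0+4) * Xc n x (3*i0+5) + Kc n κ (6*i0+5) * Xc n x (3*i0+5) := by
  have h := steady_rows n κ x hst ⟨3*i0+5, by omega⟩
  have key : ∀ i ∈ Finset.range n, blockT n κ x ⟨3*i0+5, by omega⟩ i
      = if i = i0 then
          (Kc n κ (6*i0+3) * (Xc n x 2 * Xc n x (3*i0+4))
            - Kc n κ (6*i0+4) * Xc n x (3*i0+5) - Kc n κ (6*i0+5) * Xc n x (3*i0+5))
        else 0 := by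
    intro i hi
    unfold blockT
    by_cases hii : i = i0
    · subst hii
      rw [if_pos rfl]
      simp (disch := omega) only [e_one, e_zero]
      ring
    · simp (disch := omega) only [e_zero]
      simp [hii]
  rw [Finset.sum_congr rfl key, Finset.sum_ite_eq' (Finset.range n) i0] at h
  rw [if_pos (Finset.mem_range.mpr hi0)] at h
  linarith

/-- Steady state equation for the substrate `S_0` (species `2`, 1-based). -/
lemma eqChain0 (n : ℕ) (κ : Fin (6*n) → ℝ) (x : Fin (3*n+3) → ℝ)
    (hst : isSteady n κ x) (hn : 0 < n) :
    Kc n κ 1 * Xc n x 3 + Kc n κ 5 * Xc n x 5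
      = Kc n κ 0 * (Xc n x 0 * Xc n x 1) := by
  have h := steady_rows n κ x hst ⟨1, by omega⟩
  have key : ∀ i ∈ Finset.range n, blockT n κ x ⟨1, by omega⟩ i
      = if i = 0 then
          (- (Kc n κ 0 * (Xc n x 0 * Xc n x 1)) + Kc n κ 1 * Xc n x 3 + Kc n κ 5 * Xc n x 5)
        else 0 := by
    intro i hi
    unfold blockT
    by_cases hii : i = 0
    · subst hii
      rw [if_pos rfl]
      simp (disch := omega) only [e_one, e_zero]
      ring
    · simp (disch := omega) only [e_zero]
      simp [hii]
  rw [Finset.sum_congr rfl key, Finset.sum_ite_eq' (Finset.range n) 0] at h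
  rw [if_pos (Finset.mem_range.mpr hn)] at h
  linarith

/-- Steady state equation for the substrate `S_{i0}` (species `3 i0 + 2`, 1-based), `i0 ≥ 1`. -/
lemma eqChain (n : ℕ) (κ : Fin (6*n) → ℝ) (x : Fin (3*n+3) → ℝ)
    (hst : isSteady n κ x) (i0 : ℕ) (h1 : 1 ≤ i0) (hi0 : i0 < n) :
    (- (Kc n κ (6*i0+0) * (Xc n x 0 * Xc n x (3*i0+1)))
        + Kc n κ (6*i0+1) * Xc n x (3*i0+3) + Kc n κ (6*i0+5) * Xc n x (3*i0+5))
      + (Kc n κ (6*(i0-1)+2) * Xc n x (3*(i0-1)+3)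
        - Kc n κ (6*(i0-1)+3) * (Xc n x 2 * Xc n x (3*(i0-1)+4))
        + Kc n κ (6*(i0-1)+4) * Xc n x (3*(i0-1)+5)) = 0 := by
  have h := steady_rows n κ x hst ⟨3*i0+1, by omega⟩
  have key : ∀ i ∈ Finset.range n, blockT n κ x ⟨3*i0+1, by omega⟩ i
      = (if i = i0 then
          (- (Kc n κ (6*i0+0) * (Xc n x 0 * Xc n x (3*i0+1)))
            + Kc n κ (6*i0+1) * Xc n x (3*i0+3) + Kc n κ (6*i0+5) * Xc n x (3*i0+5)) else 0)
        + (if i = i0 - 1 then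
          (Kc n κ (6*(i0-1)+2) * Xc n x (3*(i0-1)+3)
            - Kc n κ (6*(i0-1)+3) * (Xc n x 2 * Xc n x (3*(i0-1)+4))
            + Kc n κ (6*(i0-1)+4) * Xc n x (3*(i0-1)+5)) else 0) := by
    intro i hi
    unfold blockT
    by_cases hii : i = i0
    · subst hii
      rw [if_pos rfl, if_neg (by omega)]
      simp (disch := omega) only [e_one, e_zero]
      ring
    · by_cases hii' : i = i0 - 1
      · subst hii'
        rw [if_neg hii, if_pos rfl]
        simp (disch := omega) only [e_one, e_zero]
        ring
      · rw [if_neg hii, if_neg hii']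
        simp (disch := omega) only [e_zero]
        ring
  rw [Finset.sum_congr rfl key, Finset.sum_add_distrib,
    Finset.sum_ite_eq' (Finset.range n) i0, Finset.sum_ite_eq' (Finset.range n) (i0-1)] at h
  rw [if_pos (Finset.mem_range.mpr hi0), if_pos (Finset.mem_range.mpr (by omega))] at h
  linarith
/-- Cut equation: net flux through each level vanishes. -/
lemma eqCut (n : ℕ) (κ : Fin (6*n) → ℝ) (x : Fin (3*n+3) → ℝ)
    (hst : isSteady n κ x) : ∀ i0, i0 < n →
    Kc n κ (6*i0+2) * Xc n x (3*i0+3) = Kc n κ (6*i0+5) * Xc n x (3*i0+5) := by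
  intro i0
  induction i0 with
  | zero =>
    intro h0
    have hc := eqChain0 n κ x hst (by omega)
    have hA := eqA n κ x hst 0 h0
    norm_num at hc hA ⊢
    linarith
  | succ k ih =>
    intro hk1
    have hk : k < n := by omega
    have hc := eqChain n κ x hst (k+1) (by omega) hk1
    simp only [Nat.add_sub_cancel] at hc
    have hA := eqA n κ x hst (k+1) hk1
    have hB := eqB n κ x hst k hk
    have ihk := ih hk
    linarith

/-- Transfer of ratios. -/
lemma div_eq_of_cross {aC bC t s : ℝ} (haC : 0 < aC) (ht : 0 < t)
    (h : bC * t = aC * s) : bC / aC = s / t := by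
  rw [div_eq_div_iff haC.ne' ht.ne']
  linarith

lemma ratio_A {K0 K1 K2 a0 aP aC b0 bP bC : ℝ}
    (hK0 : 0 < K0) (hK1 : 0 < K1) (hK2 : 0 < K2)
    (ha0 : 0 < a0) (haP : 0 < aP) (haC : 0 < aC)
    (ea : K0 * (a0 * aP) = K1 * aC + K2 * aC)
    (eb : K0 * (b0 * bP) = K1 * bC + K2 * bC) :
    bC / aC = (b0 / a0) * (bP / aP) := by
  rw [div_mul_div_comm]
  apply div_eq_of_cross haC (by positivity)
  have hK : (0:ℝ) < K1 + K2 := by linarith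
  apply mul_left_cancel₀ hK.ne'
  calc (K1+K2) * (bC*(a0*aP)) = (K1*bC + K2*bC) * (a0*aP) := by ring
    _ = (K0*(b0*bP)) * (a0*aP) := by rw [← eb]
    _ = (K0*(a0*aP)) * (b0*bP) := by ring
    _ = (K1*aC + K2*aC) * (b0*bP) := by rw [ea]
    _ = (K1+K2)*(aC*(b0*bP)) := by ring

lemma ratio_C {K2 K5 aC aD bC bD : ℝ}
    (hK2 : 0 < K2) (hK5 : 0 < K5) (haC : 0 < aC) (haD : 0 < aD)
    (ea : K2 * aC = K5 * aD) (eb : K2 * bC = K5 * bD) :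
    bC / aC = bD / aD := by
  rw [div_eq_div_iff haC.ne' haD.ne']
  apply mul_left_cancel₀ hK2.ne'
  calc K2 * (bC * aD) = (K2 * bC) * aD := by ring
    _ = (K5 * bD) * aD := by rw [eb]
    _ = bD * (K5 * aD) := by ring
    _ = bD * (K2 * aC) := by rw [ea]
    _ = K2 * (bD * aC) := by ring
/-- Componentwise ratio of two states, 0-based index. -/
noncomputable def uRat (n : ℕ) (a b : Fin (3*n+3) → ℝ) (j : ℕ) : ℝ :=
  Xc n b j / Xc n a j

lemma div_av_eq (n : ℕ) (a b : Fin (3*n+3) → ℝ) (j : ℕ) :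
    av n b j / av n a j = uRat n a b (j-1) := rfl

section ratios
variable (n : ℕ) (κ : Fin (6*n) → ℝ) (a b : Fin (3*n+3) → ℝ)
  (hκ : ∀ r, 0 < κ r) (ha : ∀ j, 0 < a j) (hb : ∀ j, 0 < b j)
  (hsa : isSteady n κ a) (hsb : isSteady n κ b)

include hκ ha hb hsa hsb

lemma ratA (i0 : ℕ) (hi0 : i0 < n) :
    uRat n a b (3*i0+3) = uRat n a b 0 * uRat n a b (3*i0+1) := by
  exact ratio_A (Kc_pos n κ hκ _ (by omega)) (Kc_pos n κ hκ _ (by omega))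
    (Kc_pos n κ hκ _ (by omega)) (Xc_pos n a ha 0 (by omega))
    (Xc_pos n a ha (3*i0+1) (by omega)) (Xc_pos n a ha (3*i0+3) (by omega))
    (eqA n κ a hsa i0 hi0) (eqA n κ b hsb i0 hi0)

lemma ratB (i0 : ℕ) (hi0 : i0 < n) :
    uRat n a b (3*i0+5) = uRat n a b 2 * uRat n a b (3*i0+4) := by
  exact ratio_A (Kc_pos n κ hκ _ (by omega)) (Kc_pos n κ hκ _ (by omega))
    (Kc_pos n κ hκ _ (by omega)) (Xc_pos n a ha 2 (by omega))
    (Xc_pos n a ha (3*i0+4) (by omega)) (Xc_pos n a ha (3*i0+5) (by omega))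
    (eqB n κ a hsa i0 hi0) (eqB n κ b hsb i0 hi0)

lemma ratC (i0 : ℕ) (hi0 : i0 < n) :
    uRat n a b (3*i0+3) = uRat n a b (3*i0+5) := by
  exact ratio_C (Kc_pos n κ hκ _ (by omega)) (Kc_pos n κ hκ _ (by omega))
    (Xc_pos n a ha (3*i0+3) (by omega)) (Xc_pos n a ha (3*i0+5) (by omega))
    (eqCut n κ a hsa i0 hi0) (eqCut n κ b hsb i0 hi0)

lemma uRat_pos (j : ℕ) (hj : j < 3*n+3) : 0 < uRat n a b j :=
  div_pos (Xc_pos n b hb j hj) (Xc_pos n a ha j hj)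

end ratios

/-- (Reconstruction of steady state ratios.) For two positive
steady states `a, b` with `Z(b−a) = 0` and `ξ = (b₁/a₁)/(b₃/a₃)`, all ratios
`b_j/a_j` (`j = 4,…,3+3n`) are determined by `b₁/a₁`, `b₂/a₂`, `b₃/a₃`. -/
theorem reconstruction_of_ratios (n : ℕ) (hn : 2 ≤ n)
    (κ : Fin (6*n) → ℝ) (hκ : ∀ r, 0 < κ r)
    (a b : Fin (3*n+3) → ℝ) (ha : ∀ j, 0 < a j) (hb : ∀ j, 0 < b j)
    (hsa : isSteady n κ a) (hsb : isSteady n κ b)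
    (hZ : (Zmat n).mulVec (b - a) = 0)
    (ξ : ℝ) (hξ : ξ = (av n b 1 / av n a 1) / (av n b 3 / av n a 3)) :
    av n b 4 / av n a 4 = (av n b 2 / av n a 2) * (av n b 1 / av n a 1) ∧
    av n b 5 / av n a 5 = ξ * (av n b 2 / av n a 2) ∧
    av n b 6 / av n a 6 = ξ * (av n b 2 / av n a 2) * (av n b 3 / av n a 3) ∧
    ∀ i : ℕ, 1 ≤ i → i ≤ n →
      av n b (1+3*i) / av n a (1+3*i) = ξ^(i-1) * (av n b 4 / av n a 4) ∧
      av n b (2+3*i) / av n a (2+3*i) = ξ^(i-1) * (av n b 5 / av n a 5) ∧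
      av n b (3+3*i) / av n a (3+3*i) = ξ^(i-1) * (av n b 6 / av n a 6) ∧
      av n b (1+3*i) / av n a (1+3*i) = av n b (3+3*i) / av n a (3+3*i) := by
  clear hZ
  have hξ' : ξ = uRat n a b 0 / uRat n a b 2 := by
    simp only [div_av_eq] at hξ
    norm_num at hξ
    exact hξ
  have h1 := ratA n κ a b hκ ha hb hsa hsb 0 (by omega)
  norm_num at h1
  have h2 := ratC n κ a b hκ ha hb hsa hsb 0 (by omega)
  norm_num at h2
  have h3 := ratB n κ a b hκ ha hb hsa hsb 0 (by omega)
  norm_num at h3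
  have hu2 : 0 < uRat n a b 2 := uRat_pos n κ a b hκ ha hb hsa hsb 2 (by omega)
  have G1 : uRat n a b 3 = uRat n a b 1 * uRat n a b 0 := by rw [h1]; ring
  have G2 : uRat n a b 4 = ξ * uRat n a b 1 := by
    rw [hξ']
    field_simp
    linear_combination h1 - h2 - h3
  have G3 : uRat n a b 5 = ξ * uRat n a b 1 * uRat n a b 2 := by
    rw [h3, G2]; ring
  have main : ∀ i, 1 ≤ i → i ≤ n →
      uRat n a b (3*i) = ξ^(i-1) * uRat n a b 3 ∧
      uRat n a b (3*i+1) = ξ^(i-1) * uRat n a b 4 ∧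
      uRat n a b (3*i+2) = ξ^(i-1) * uRat n a b 5 := by
    intro i hi
    induction i, hi using Nat.le_induction with
    | base => intro _; norm_num
    | succ k hk ihk =>
      intro hkn
      obtain ⟨e3, e4, e5⟩ := ihk (by omega)
      have hbk : k < n := by omega
      have hp : ξ^(k-1) * ξ = ξ^k := by
        rw [← pow_succ]
        congr 1
        omega
      have c3 : uRat n a b (3*k+3) = ξ^k * uRat n a b 3 := by
        rw [ratA n κ a b hκ ha hb hsa hsb k hbk, e4, G2, h1]
        linear_combination (uRat n a b 0 * uRat n a b 1) * hp
      have c5 : uRat n a b (3*k+5) = ξ^k * uRat n a b 5 := by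
        rw [← ratC n κ a b hκ ha hb hsa hsb k hbk, c3, h2]
      have c4 : uRat n a b (3*k+4) = ξ^k * uRat n a b 4 := by
        have hml : uRat n a b 2 * uRat n a b (3*k+4)
            = uRat n a b 2 * (ξ^k * uRat n a b 4) := by
          rw [← ratB n κ a b hκ ha hb hsa hsb k hbk, c5, h3]
          ring
        exact mul_left_cancel₀ hu2.ne' hml
      refine ⟨?_, ?_, ?_⟩
      · rw [show 3*(k+1) = 3*k+3 by ring, show k+1-1 = k by omega]; exact c3
      · rw [show 3*(k+1)+1 = 3*k+4 by ring, show k+1-1 = k by omega]; exact c4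
      · rw [show 3*(k+1)+2 = 3*k+5 by ring, show k+1-1 = k by omega]; exact c5
  refine ⟨?_, ?_, ?_, ?_⟩
  · simp only [div_av_eq]; exact G1
  · simp only [div_av_eq]; exact G2
  · simp only [div_av_eq]; exact G3
  · intro i h1i hin
    obtain ⟨e3, e4, e5⟩ := main i h1i hin
    refine ⟨?_, ?_, ?_, ?_⟩ <;> simp only [div_av_eq]
    · rw [show 1+3*i-1 = 3*i by omega]; exact e3
    · rw [show 2+3*i-1 = 3*i+1 by omega]; exact e4
    · rw [show 3+3*i-1 = 3*i+2 by omega]; exact e5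
    · rw [show 1+3*i-1 = 3*i by omega, show 3+3*i-1 = 3*i+2 by omega, e3, e5, h2]

end Phos
end
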